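/- arXiv:2302.08265 — 7 statements merged into one kernel-verified Lean document; each statement's English description precedes it below -/
import Mathlib

section
/- Let a : ℕ → ℕ be defined by a(0) = 4 and a(n+1) = a(n) * (a(n) - 1) / 2 (i.e., a(n+1) = C(a(n), 2)). Then the sequence n ↦ a(n) mod 2 is not eventually periodic. -/
theorem stmt_1 (a : ℕ → ℕ) (h0 : a 0 = 4)
    (hrec : ∀ n, a (n + 1) = (a n).choose 2) :
    ¬ ∃ N p : ℕ, 1 ≤ p ∧ ∀ n ≥ N, a (n + p) % 2 = a n % 2 := by
  rintro ⟨N, p, hp, hper⟩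
  -- a n ≥ 4 for all n
  have h4 : ∀ n, 4 ≤ a n := by
    intro n
    induction n with
    | zero => omega
    | succ k ih =>
      rw [hrec]
      calc 4 ≤ Nat.choose 4 2 := by decide
        _ ≤ (a k).choose 2 := Nat.choose_le_choose 2 ih
  -- key identity in ℕ : 2 * a(n+1) = a n * (a n - 1)
  have hkeyN : ∀ n, 2 * a (n + 1) = a n * (a n - 1) := by
    intro n
    have h1 : 1 ≤ a n := le_trans (by norm_num) (h4 n)
    have hev : 2 ∣ a n * (a n - 1) := by
      have := Nat.even_mul_succ_self (a n - 1)
      rw [Nat.sub_add_cancel h1] at this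
      rcases this with ⟨c, hc⟩
      exact ⟨c, by rw [mul_comm, hc]; omega⟩
    rw [hrec, Nat.choose_two_right, Nat.mul_div_cancel' hev]
  -- key identity in ℤ
  have hkey : ∀ n, 2 * (a (n + 1) : ℤ) = (a n : ℤ) * ((a n : ℤ) - 1) := by
    intro n
    have h1 : 1 ≤ a n := le_trans (by norm_num) (h4 n)
    have := hkeyN n
    have := congrArg (Nat.cast : ℕ → ℤ) this
    push_cast [h1] at this
    linarith
  -- a is strictly increasing
  have hmono : StrictMono a := by
    apply strictMono_nat_of_lt_succ
    intro n
    have h4' : (4 : ℤ) ≤ a n := by exact_mod_cast h4 n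
    have hlt : (a n : ℤ) < a (n + 1) := by nlinarith [hkey n]
    exact_mod_cast hlt
  -- divisibility: 2^k ∣ a(n+p) - a n for all n ≥ N
  have hdvd : ∀ k : ℕ, ∀ n, N ≤ n → (2 : ℤ) ^ k ∣ (a (n + p) : ℤ) - (a n : ℤ) := by
    intro k
    induction k with
    | zero => intro n _; simp
    | succ k ih =>
      intro n hn
      have ih1 := ih (n + 1) (by omega)
      have hparity : (2 : ℤ) ∣ (a (n + p) : ℤ) - (a n : ℤ) := by
        have := hper n hn
        omega
      have hodd : ¬ (2 : ℤ) ∣ (a (n + p) : ℤ) + (a n : ℤ) - 1 := by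
        omega
      have hid : ((a (n + p) : ℤ) - a n) * ((a (n + p) : ℤ) + a n - 1)
          = 2 * ((a (n + 1 + p) : ℤ) - a (n + 1)) := by
        have h1 := hkey n
        have h2 := hkey (n + p)
        have : n + 1 + p = n + p + 1 := by omega
        rw [this]
        ring_nf
        ring_nf at h1 h2
        linarith
      have hdvd2 : (2 : ℤ) ^ (k + 1) ∣
          ((a (n + p) : ℤ) - a n) * ((a (n + p) : ℤ) + a n - 1) := by
        rw [hid, pow_succ, mul_comm ((2:ℤ)^k) 2]
        exact mul_dvd_mul_left 2 ih1
      exact Prime.pow_dvd_of_dvd_mul_right Int.prime_two _ hodd hdvd2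
  -- contradiction
  have hpos : (a N : ℤ) < (a (N + p) : ℤ) := by
    exact_mod_cast hmono (by omega : N < N + p)
  set D : ℤ := (a (N + p) : ℤ) - a N with hD
  have hDpos : 0 < D := by omega
  obtain ⟨k, hk⟩ := pow_unbounded_of_one_lt D (by norm_num : (1 : ℤ) < 2)
  have := Int.le_of_dvd hDpos (hdvd k N le_rfl)
  omega
end

section
/- For each r ∈ ℕ let a_r : ℕ → ℕ be defined by a_r(0) = r and a_r(n+1) = C(a_r(n), 2), and let β_r(n) = a_r(n) mod 2. For all k ≥ 1, the map Φ_k sending r ∈ {0, ..., 2^k - 1} to the bit string (β_r(0), β_r(1), ..., β_r(k-1)) ∈ {0,1}^k is a bijection. -/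
/-!
Since `2 * (C(s,2) - C(r,2)) = (s - r) * (s + r - 1)` and `s + r - 1` is odd when `r ≡ s (mod 2)`,
agreement of `r` and `s` mod 2 together with agreement of `C(r,2)` and `C(s,2)` mod `2^k` forces
`r ≡ s (mod 2^(k+1))`. By induction on `k`, the first `k` parities of the orbit of `r` under
`x ↦ C(x,2)` determine `r` mod `2^k`, so `Φ_k` is injective, hence bijective between sets of
size `2^k`.
-/

theorem two_mul_choose_two_sub_choose_two (r s : ℕ) :
    2 * ((s.choose 2 : ℤ) - r.choose 2) = (s - r) * (s + r - 1) := by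
  qify
  rw [Nat.cast_choose_two, Nat.cast_choose_two]
  ring

theorem Nat.ModEq.of_choose_two_modEq_pow {k r s : ℕ} (h2 : r ≡ s [MOD 2])
    (hk : r.choose 2 ≡ s.choose 2 [MOD 2 ^ k]) : r ≡ s [MOD 2 ^ (k + 1)] := by
  rw [Nat.modEq_iff_dvd] at h2 hk ⊢
  push_cast at h2 hk ⊢
  have hodd : Odd ((s : ℤ) + r - 1) := by
    obtain ⟨d, hd⟩ := h2
    exact ⟨d + r - 1, by linarith⟩
  have hcop : IsCoprime ((2 : ℤ) ^ (k + 1)) ((s : ℤ) + r - 1) :=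
    (Int.isCoprime_two_left.mpr hodd).pow_left
  refine hcop.dvd_of_dvd_mul_right ?_
  rw [← two_mul_choose_two_sub_choose_two, _root_.pow_succ']
  exact mul_dvd_mul_left 2 hk

theorem Nat.modEq_two_pow_of_iterate_choose_two_modEq_two {k r s : ℕ}
    (h : ∀ i < k, (·.choose 2)^[i] r ≡ (·.choose 2)^[i] s [MOD 2]) : r ≡ s [MOD 2 ^ k] := by
  induction k generalizing r s with
  | zero => exact Nat.modEq_one
  | succ k ih =>
    refine Nat.ModEq.of_choose_two_modEq_pow (h 0 k.succ_pos) (ih fun i hi => ?_)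
    simpa only [Function.iterate_succ_apply] using h (i + 1) (Nat.succ_lt_succ hi)

theorem stmt_2 (a : ℕ → ℕ → ℕ) (h0 : ∀ r, a r 0 = r)
    (hrec : ∀ r n, a r (n + 1) = (a r n).choose 2)
    (k : ℕ) :
    Function.Bijective (fun r : Fin (2 ^ k) =>
      (fun i : Fin k => (⟨a r.val i.val % 2, Nat.mod_lt _ (by norm_num)⟩ : Fin 2))) := by
  have ha : ∀ r n, a r n = (·.choose 2)^[n] r := by
    intro r n
    induction n with
    | zero => exact h0 r
    | succ n ih => rw [hrec, ih, Function.iterate_succ_apply']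
  refine (Fintype.bijective_iff_injective_and_card _).mpr ⟨fun r s hrs => ?_, by simp⟩
  have hmod : (r : ℕ) ≡ s [MOD 2 ^ k] :=
    Nat.modEq_two_pow_of_iterate_choose_two_modEq_two fun i hi => by
      simpa only [Nat.ModEq, ha, Fin.mk.injEq] using congrFun hrs ⟨i, hi⟩
  exact Fin.ext (hmod.eq_of_lt_of_lt r.isLt s.isLt)
end

section
/- If a, b ∈ {0, ..., 2^k - 1} satisfy C(a,2) ≡ C(b,2) (mod 2^(k-1)) and a, b have the same parity, then a = b. -/
lemma two_mul_choose_two (n : ℕ) : 2 * n.choose 2 + n = n * n := by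
  induction n with
  | zero => rfl
  | succ m ih =>
    rw [Nat.choose_succ_succ, Nat.choose_one_right]
    nlinarith [ih]

theorem stmt_3 (k : ℕ) (hk : 1 ≤ k) (a b : ℕ) (ha : a < 2 ^ k) (hb : b < 2 ^ k)
    (hcong : a.choose 2 ≡ b.choose 2 [MOD 2 ^ (k - 1)])
    (hpar : a % 2 = b % 2) : a = b := by
  have hd : ((2 ^ (k - 1) : ℕ) : ℤ) ∣ (b.choose 2 : ℤ) - a.choose 2 :=
    hcong.dvd
  have hkk : (2 : ℤ) ^ k = 2 * 2 ^ (k - 1) := by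
    rw [← pow_succ']
    congr 1
    omega
  have ha2 := two_mul_choose_two a
  have hb2 := two_mul_choose_two b
  have ha2' : (2 : ℤ) * (a.choose 2 : ℤ) + a = a * a := by exact_mod_cast ha2
  have hb2' : (2 : ℤ) * (b.choose 2 : ℤ) + b = b * b := by exact_mod_cast hb2
  have hd2 : (2 : ℤ) ^ k ∣ ((b : ℤ) - a) * ((b : ℤ) + a - 1) := by
    rw [hkk]
    obtain ⟨c, hc⟩ := hd
    refine ⟨c, ?_⟩
    push_cast at hc
    nlinarith [hc]
  have hodd : ¬ (2 : ℤ) ∣ ((b : ℤ) + a - 1) := by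
    rintro ⟨c, hc⟩
    omega
  have hdv : (2 : ℤ) ^ k ∣ ((b : ℤ) - a) :=
    Int.prime_two.pow_dvd_of_dvd_mul_right k hodd hd2
  have hlt : |(b : ℤ) - a| < 2 ^ k := by
    have h1 : (a : ℤ) < 2 ^ k := by exact_mod_cast ha
    have h2 : (b : ℤ) < 2 ^ k := by exact_mod_cast hb
    rw [abs_lt]; omega
  rcases eq_or_ne ((b : ℤ) - a) 0 with h0 | h0
  · omega
  · have := Int.le_of_dvd (abs_pos.mpr h0) ((dvd_abs _ _).mpr hdv)
    omega
end

section
/- If s : ℕ → ℤ is an integer sequence satisfying a holonomic recurrence over ℤ, i.e., there exist k ≥ 1 and polynomials P_1, ..., P_k ∈ ℤ[x] such that s(n) = Σ_{i=1}^k P_i(n) · s(n-i) for all n ≥ k, then s is MC-finite, i.e., for every m ≥ 1 the sequence n ↦ s(n) mod m is eventually periodic. -/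
/-- A sequence is MC-finite if its reduction modulo every `m ≥ 1` is eventually periodic. -/
def MCFinite (s : ℕ → ℤ) : Prop :=
  ∀ m : ℕ, 1 ≤ m → ∃ N p : ℕ, 1 ≤ p ∧ ∀ n ≥ N, s (n + p) % m = s n % m

theorem stmt_5 (s : ℕ → ℤ) (k : ℕ) (hk : 1 ≤ k) (P : Fin k → Polynomial ℤ)
    (hrec : ∀ n ≥ k, s n = ∑ i : Fin k, (P i).eval (n : ℤ) * s (n - (i.val + 1))) :
    MCFinite s := by
  intro m hm
  haveI : NeZero m := ⟨by omega⟩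
  let φ : ℤ →+* ZMod m := Int.castRingHom (ZMod m)
  let F : ZMod m × (Fin k → ZMod m) → ZMod m × (Fin k → ZMod m) := fun st =>
    (st.1 + 1, fun i =>
      if h : i.val + 1 < k then st.2 ⟨i.val + 1, h⟩
      else ∑ j : Fin k, ((P j).map φ).eval (st.1 + (k : ZMod m)) *
        st.2 ⟨k - (j.val + 1), by omega⟩)
  let g : ℕ → ZMod m × (Fin k → ZMod m) :=
    fun n => ((n : ZMod m), fun i => ((s (n + i) : ZMod m)))
  have hstep : ∀ n, g (n + 1) = F (g n) := by
    intro n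
    show (_, _) = (_, _)
    refine Prod.ext (by push_cast; ring) ?_
    funext i
    show ((s (n + 1 + i) : ZMod m)) = _
    by_cases h : i.val + 1 < k
    · simp only [F, dif_pos h]
      show _ = ((s (n + (i.val + 1)) : ZMod m))
      congr 2
      omega
    · simp only [F, dif_neg h]
      have hnk : n + 1 + i.val = n + k := by omega
      rw [hnk, hrec (n + k) (by omega)]
      push_cast
      refine Finset.sum_congr rfl fun j _ => ?_
      have h1 : ((P j).map φ).eval ((n : ZMod m) + (k : ZMod m))
          = (((P j).eval ((n + k : ℕ) : ℤ) : ℤ) : ZMod m) := by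
        have harg : ((n : ZMod m) + (k : ZMod m)) = (((n + k : ℕ) : ℤ) : ZMod m) := by
          push_cast; ring
        rw [harg, Polynomial.eval_intCast_map]
        rfl
      have h2 : n + k - (j.val + 1) = n + (k - (j.val + 1)) := by omega
      rw [h1, h2]
      push_cast
      ring
  have hiter : ∀ a t, g (a + t) = F^[t] (g a) := by
    intro a t
    induction t with
    | zero => rfl
    | succ t ih => rw [← Nat.add_assoc, hstep, ih, Function.iterate_succ_apply']
  obtain ⟨a, b, hne, hab⟩ : ∃ a b : ℕ, a ≠ b ∧ g a = g b :=
    Finite.exists_ne_map_eq_of_infinite g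
  rcases Nat.lt_or_ge a b with hlt | hge
  case _ =>
    refine ⟨a, b - a, by omega, fun n hn => ?_⟩
    have key : g (n + (b - a)) = g n := by
      have e1 : n + (b - a) = b + (n - a) := by omega
      have e2 : n = a + (n - a) := by omega
      rw [e1, hiter b, ← hab, ← hiter a, ← e2]
    have := congrFun (congrArg Prod.snd key) ⟨0, hk⟩
    rwa [ZMod.intCast_eq_intCast_iff] at this
  case _ =>
    have hlt : b < a := by omega
    refine ⟨b, a - b, by omega, fun n hn => ?_⟩
    have key : g (n + (a - b)) = g n := by
      have e1 : n + (a - b) = a + (n - b) := by omega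
      have e2 : n = b + (n - b) := by omega
      rw [e1, hiter a, hab, ← hiter b, ← e2]
    have := congrFun (congrArg Prod.snd key) ⟨0, hk⟩
    rwa [ZMod.intCast_eq_intCast_iff] at this
end

section
/- The sequence s(n) = (1/2) · C(2n, n) (for n ≥ 1) is not MC-finite; in fact n ↦ s(n) mod 2 is not eventually periodic, since s(n) is odd if and only if n is a power of 2. -/
/-! By Kummer's theorem, the 2-adic valuation of `C(2n, n)` is the number of carries when `n` is
added to itself in binary, which is the binary digit sum of `n`. So `C(2n, n) / 2` is odd exactly
when that digit sum is `1`, i.e. when `n` is a power of `2`. The powers of `2` cannot be eventually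
periodic: with period `p`, a power `2 ^ k > p` would force `2 ^ k + p` to be one as well. -/

theorem padicValNat_eq_one_iff_not_dvd_div {p a : ℕ} [Fact p.Prime] (ha : a ≠ 0) (hpa : p ∣ a) :
    padicValNat p a = 1 ↔ ¬ p ∣ a / p := by
  obtain ⟨b, rfl⟩ := hpa
  have hp : p ≠ 0 := (Fact.out : p.Prime).ne_zero
  have hb : b ≠ 0 := right_ne_zero_of_mul ha
  rw [padicValNat.mul hp hb, padicValNat_self, Nat.mul_div_cancel_left b (Nat.pos_of_ne_zero hp),
    add_eq_left, padicValNat.eq_zero_iff]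
  simp [(Fact.out : p.Prime).ne_one, hb]

theorem digits_two_sum_two_mul (n : ℕ) : (Nat.digits 2 (2 * n)).sum = (Nat.digits 2 n).sum := by
  rcases Nat.eq_zero_or_pos n with rfl | hn
  · simp
  · rw [Nat.digits_base_mul one_lt_two hn, List.sum_cons, zero_add]

theorem padicValNat_two_centralBinom (n : ℕ) :
    padicValNat 2 n.centralBinom = (Nat.digits 2 n).sum := by
  have := sub_one_mul_padicValNat_choose_eq_sub_sum_digits' (p := 2) (k := n) (n := n)
  rw [← two_mul, digits_two_sum_two_mul, ← Nat.centralBinom_eq_two_mul_choose] at this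
  omega

theorem digits_sum_eq_zero_iff {b n : ℕ} : (b.digits n).sum = 0 ↔ n = 0 := by
  refine ⟨fun h => ?_, by rintro rfl; simp⟩
  by_contra hn
  exact Nat.getLast_digit_ne_zero b hn
    (List.sum_eq_zero_iff.mp h _ (List.getLast_mem (Nat.digits_ne_nil_iff_ne_zero.mpr hn)))

theorem isPowerOfTwo_two_mul_iff {n : ℕ} (hn : n ≠ 0) :
    (2 * n).isPowerOfTwo ↔ n.isPowerOfTwo := by
  constructor
  · rintro ⟨_ | k, hk⟩
    · omega
    · exact ⟨k, by rw [pow_succ'] at hk; omega⟩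
  · rintro ⟨k, rfl⟩
    exact ⟨k + 1, (pow_succ' 2 k).symm⟩

theorem isPowerOfTwo_two_mul_add_one_iff (n : ℕ) :
    (2 * n + 1).isPowerOfTwo ↔ n = 0 := by
  constructor
  · rintro ⟨_ | k, hk⟩
    · omega
    · rw [pow_succ'] at hk; omega
  · rintro rfl
    exact Nat.isPowerOfTwo_one

theorem digits_two_sum_eq_one_iff (n : ℕ) : (Nat.digits 2 n).sum = 1 ↔ n.isPowerOfTwo := by
  induction n using Nat.evenOddRec with
  | h0 => simp [Nat.not_isPowerOfTwo_zero]
  | h_even n ih =>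
    rcases eq_or_ne n 0 with rfl | hn
    · simp [Nat.not_isPowerOfTwo_zero]
    · rw [digits_two_sum_two_mul, ih, isPowerOfTwo_two_mul_iff hn]
  | h_odd n _ =>
    rw [isPowerOfTwo_two_mul_add_one_iff, add_comm,
      Nat.digits_add 2 one_lt_two 1 n one_lt_two (Or.inl one_ne_zero), List.sum_cons,
      add_eq_left, digits_sum_eq_zero_iff]

theorem centralBinom_div_two_mod_two_eq_one_iff (n : ℕ) :
    n.centralBinom / 2 % 2 = 1 ↔ n.isPowerOfTwo := by
  rcases Nat.eq_zero_or_pos n with rfl | hn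
  · simp [Nat.not_isPowerOfTwo_zero]
  rw [← digits_two_sum_eq_one_iff, ← padicValNat_two_centralBinom,
    padicValNat_eq_one_iff_not_dvd_div (Nat.centralBinom_ne_zero n)
      (Nat.two_dvd_centralBinom_of_one_le hn), Nat.two_dvd_ne_zero]

theorem not_eventually_periodic_isPowerOfTwo :
    ¬ ∃ N p : ℕ, 1 ≤ p ∧ ∀ n ≥ N, ((n + p).isPowerOfTwo ↔ n.isPowerOfTwo) := by
  rintro ⟨N, p, hp, hper⟩
  have hN : N + p < 2 ^ (N + p) := Nat.lt_two_pow_self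
  obtain ⟨j, hj⟩ := (hper (2 ^ (N + p)) (by omega)).mpr ⟨N + p, rfl⟩
  have hlo : N + p < j := (Nat.pow_lt_pow_iff_right one_lt_two).mp (by omega)
  have hhi : j < N + p + 1 := (Nat.pow_lt_pow_iff_right one_lt_two).mp (by rw [pow_succ]; omega)
  omega

theorem stmt_7 (s : ℕ → ℕ) (hs : ∀ n, s n = (2 * n).choose n / 2) :
    (∀ n ≥ 1, (s n % 2 = 1 ↔ ∃ m : ℕ, n = 2 ^ m)) ∧
    ¬ ∃ N p : ℕ, 1 ≤ p ∧ ∀ n ≥ N, s (n + p) % 2 = s n % 2 := by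
  have hodd (n : ℕ) : s n % 2 = 1 ↔ n.isPowerOfTwo := by
    rw [hs, ← Nat.centralBinom_eq_two_mul_choose, centralBinom_div_two_mod_two_eq_one_iff]
  refine ⟨fun n _ => hodd n, ?_⟩
  rintro ⟨N, p, hp, hper⟩
  exact not_eventually_periodic_isPowerOfTwo
    ⟨N, p, hp, fun n hn => by rw [← hodd, ← hodd, hper n hn]⟩
end

section
/- The Catalan numbers C(n) = C(2n,n)/(n+1) are not MC-finite: the sequence n ↦ C(n) mod 2 is not eventually periodic, since C(n) is odd if and only if n = 2^m − 1 for some m ∈ ℕ. -/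
/-!
Reducing the Segner recurrence `C(n+1) = ∑_{i+j=n} C(i) C(j)` modulo 2, the terms `(i, j)` and
`(j, i)` cancel, leaving only the diagonal term `C(n/2)² ≡ C(n/2)` when `n` is even. Hence
`C(2k+1) ≡ C(k)` and `C(2k+2) ≡ 0`, so by induction `C(n)` is odd exactly when `n + 1` is a power
of two. Odd values therefore occur at gaps that grow without bound, which rules out eventual
periodicity: a period `p` would make `C(2^m - 1 + p)` odd for some `m` with `p < 2^m`, but
`2^m + p` lies strictly between two consecutive powers of two.
-/

open Finset

theorem CharTwo.sum_mul_eq_zero_of_swap_mem {R α : Type*} [CommRing R] [CharP R 2]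
    (f : α → R) {s : Finset (α × α)} (hswap : ∀ ij ∈ s, ij.swap ∈ s)
    (hdiag : ∀ ij ∈ s, ij.1 ≠ ij.2) : ∑ ij ∈ s, f ij.1 * f ij.2 = 0 :=
  sum_involution (fun ij _ => ij.swap)
    (fun ij _ => by rw [Prod.fst_swap, Prod.snd_swap, mul_comm, CharTwo.add_self_eq_zero])
    (fun ij hij _ hfix => hdiag ij hij (congrArg Prod.snd hfix))
    hswap (fun ij _ => ij.swap_swap)

theorem catalan_two_mul_add_one_cast_zmod_two (k : ℕ) :
    (catalan (2 * k + 1) : ZMod 2) = catalan k := by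
  have hmem : (k, k) ∈ antidiagonal (2 * k) := by simp [two_mul]
  have hrest : ∑ ij ∈ (antidiagonal (2 * k)).erase (k, k),
      (catalan ij.1 : ZMod 2) * catalan ij.2 = 0 := by
    refine CharTwo.sum_mul_eq_zero_of_swap_mem (fun n => (catalan n : ZMod 2))
      (fun ij hij => ?_) (fun ij hij => ?_)
    · rw [mem_erase] at hij ⊢
      exact ⟨by simpa [Prod.ext_iff, and_comm] using hij.1,
        HasAntidiagonal.swap_mem_antidiagonal.mpr hij.2⟩
    · simp only [mem_erase, HasAntidiagonal.mem_antidiagonal, ne_eq, Prod.ext_iff] at hij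
      omega
  rw [catalan_succ', Nat.cast_sum, ← add_sum_erase _ _ hmem]
  push_cast
  rw [hrest, add_zero, ← sq, ZMod.pow_card]

theorem catalan_two_mul_add_two_cast_zmod_two (k : ℕ) :
    (catalan (2 * k + 2) : ZMod 2) = 0 := by
  rw [catalan_succ']
  push_cast
  refine CharTwo.sum_mul_eq_zero_of_swap_mem (fun n => (catalan n : ZMod 2))
    (fun _ hij => HasAntidiagonal.swap_mem_antidiagonal.mpr hij) (fun ij hij => ?_)
  rw [HasAntidiagonal.mem_antidiagonal] at hij
  omega

theorem odd_catalan_iff (n : ℕ) : Odd (catalan n) ↔ ∃ m, n + 1 = 2 ^ m := by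
  induction n using Nat.strong_induction_on with
  | _ n ih =>
    obtain ⟨k, rfl | rfl⟩ := Nat.even_or_odd' n
    · rcases k with _ | k
      · simpa using ⟨0, rfl⟩
      · have heven : Even (catalan (2 * k + 2)) :=
          ZMod.natCast_eq_zero_iff_even.mp (catalan_two_mul_add_two_cast_zmod_two k)
        refine iff_of_false (Nat.not_odd_iff_even.mpr heven) fun ⟨m, hm⟩ => ?_
        rcases m with _ | m
        · omega
        · rw [pow_succ] at hm
          omega
    · rw [← ZMod.natCast_eq_one_iff_odd, catalan_two_mul_add_one_cast_zmod_two,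
        ZMod.natCast_eq_one_iff_odd, ih k (by omega)]
      constructor
      · rintro ⟨m, hm⟩
        exact ⟨m + 1, by rw [pow_succ]; omega⟩
      · rintro ⟨_ | m, hm⟩
        · omega
        · rw [pow_succ] at hm
          exact ⟨m, by omega⟩

theorem not_exists_two_pow_eq_two_pow_add {m p : ℕ} (hp : 0 < p) (hpm : p < 2 ^ m) :
    ¬ ∃ m', 2 ^ m + p = 2 ^ m' := by
  rintro ⟨m', hm'⟩
  have hlt : m < m' := (Nat.pow_lt_pow_iff_right (a := 2) (by norm_num)).mp (by omega)
  have hgt : m' < m + 1 :=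
    (Nat.pow_lt_pow_iff_right (a := 2) (by norm_num)).mp (by rw [pow_succ]; omega)
  omega

theorem stmt_8 :
    (∀ n : ℕ, (catalan n % 2 = 1 ↔ ∃ m : ℕ, n = 2 ^ m - 1)) ∧
    ¬ ∃ N p : ℕ, 1 ≤ p ∧ ∀ n ≥ N, catalan (n + p) % 2 = catalan n % 2 := by
  have odd_iff (n : ℕ) : catalan n % 2 = 1 ↔ ∃ m, n + 1 = 2 ^ m :=
    Nat.odd_iff.symm.trans (odd_catalan_iff n)
  refine ⟨fun n => (odd_iff n).trans (exists_congr fun m => ?_), ?_⟩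
  · have := @Nat.one_le_two_pow m
    omega
  · rintro ⟨N, p, hp, hper⟩
    have hN : N + p < 2 ^ (N + p) := Nat.lt_two_pow_self
    have hstart : catalan (2 ^ (N + p) - 1) % 2 = 1 := (odd_iff _).mpr ⟨N + p, by omega⟩
    obtain ⟨m', hm'⟩ := (odd_iff _).mp ((hper _ (by omega)).trans hstart)
    exact not_exists_two_pow_eq_two_pow_add (m := N + p) hp (by omega) ⟨m', by omega⟩
end

section
/- For all n ≥ 1, the number of equivalence relations on Fin n (the Bell number B(n)) is at most the number of linear quasi-orders (total preorders) on Fin n, which is at most the number of partial orders on Fin n, which is at most the number of preorders on Fin n, which is at most the number of transitive relations on Fin n. -/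
open Classical in
/-- the minimal representative of the `R`-class of `x` -/
noncomputable def mcl {n : ℕ} (R : Fin n → Fin n → Prop) (hR : Equivalence R) (x : Fin n) :
    Fin n :=
  (Finset.univ.filter (fun z => R x z)).min' ⟨x, by simp [hR.refl x]⟩

open Classical in
lemma mcl_rel {n : ℕ} (R : Fin n → Fin n → Prop) (hR : Equivalence R) (x : Fin n) :
    R x (mcl R hR x) := by
  have := Finset.min'_mem (Finset.univ.filter (fun z => R x z))
    ⟨x, by simp [hR.refl x]⟩
  simpa [mcl] using this

open Classical in
lemma mcl_eq_of_rel {n : ℕ} (R : Fin n → Fin n → Prop) (hR : Equivalence R) {x y : Fin n}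
    (h : R x y) : mcl R hR x = mcl R hR y := by
  have hset : (Finset.univ.filter (fun z => R x z)) = (Finset.univ.filter (fun z => R y z)) := by
    ext z
    simp only [Finset.mem_filter, Finset.mem_univ, true_and]
    exact ⟨fun hz => hR.trans (hR.symm h) hz, fun hz => hR.trans h hz⟩
  simp [mcl, hset]

lemma rel_of_mcl_eq {n : ℕ} (R : Fin n → Fin n → Prop) (hR : Equivalence R) {x y : Fin n}
    (h : mcl R hR x = mcl R hR y) : R x y := by
  have hx := mcl_rel R hR x
  have hy := mcl_rel R hR y
  rw [h] at hx
  exact hR.trans hx (hR.symm hy)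

theorem stmt_10 (n : ℕ) (hn : 1 ≤ n) :
    Nat.card {R : Fin n → Fin n → Prop // Equivalence R} ≤
      Nat.card {R : Fin n → Fin n → Prop //
        Reflexive R ∧ Transitive R ∧ ∀ x y, R x y ∨ R y x} ∧
    Nat.card {R : Fin n → Fin n → Prop //
        Reflexive R ∧ Transitive R ∧ ∀ x y, R x y ∨ R y x} ≤
      Nat.card {R : Fin n → Fin n → Prop //
        Reflexive R ∧ Transitive R ∧ AntiSymmetric R} ∧
    Nat.card {R : Fin n → Fin n → Prop //
        Reflexive R ∧ Transitive R ∧ AntiSymmetric R} ≤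
      Nat.card {R : Fin n → Fin n → Prop // Reflexive R ∧ Transitive R} ∧
    Nat.card {R : Fin n → Fin n → Prop // Reflexive R ∧ Transitive R} ≤
      Nat.card {R : Fin n → Fin n → Prop // Transitive R} := by
  refine ⟨?_, ?_, ?_, ?_⟩
  · -- equivalences ≤ total preorders
    apply Nat.card_le_card_of_injective
      (f := fun R : {R : Fin n → Fin n → Prop // Equivalence R} =>
        (⟨fun x y => mcl R.1 R.2 x ≤ mcl R.1 R.2 y,
          fun x => le_refl _,
          fun _ _ _ h h' => le_trans h h',
          fun x y => le_total _ _⟩ :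
          {R : Fin n → Fin n → Prop //
            Reflexive R ∧ Transitive R ∧ ∀ x y, R x y ∨ R y x}))
    rintro ⟨R₁, h₁⟩ ⟨R₂, h₂⟩ h
    have hval : (fun x y => mcl R₁ h₁ x ≤ mcl R₁ h₁ y)
        = (fun x y => mcl R₂ h₂ x ≤ mcl R₂ h₂ y) := congrArg Subtype.val h
    have key : ∀ x y, R₁ x y ↔ R₂ x y := by
      intro x y
      constructor
      · intro hxy
        have e := mcl_eq_of_rel R₁ h₁ hxy
        have h1 : mcl R₂ h₂ x ≤ mcl R₂ h₂ y := by
          have := congrFun (congrFun hval x) y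
          rw [← this]; exact le_of_eq e
        have h2 : mcl R₂ h₂ y ≤ mcl R₂ h₂ x := by
          have := congrFun (congrFun hval y) x
          rw [← this]; exact le_of_eq e.symm
        exact rel_of_mcl_eq R₂ h₂ (le_antisymm h1 h2)
      · intro hxy
        have e := mcl_eq_of_rel R₂ h₂ hxy
        have h1 : mcl R₁ h₁ x ≤ mcl R₁ h₁ y := by
          have := congrFun (congrFun hval x) y
          rw [this]; exact le_of_eq e
        have h2 : mcl R₁ h₁ y ≤ mcl R₁ h₁ x := by
          have := congrFun (congrFun hval y) x
          rw [this]; exact le_of_eq e.symm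
        exact rel_of_mcl_eq R₁ h₁ (le_antisymm h1 h2)
    exact Subtype.ext (by funext x y; exact propext (key x y))
  · -- total preorders ≤ partial orders
    apply Nat.card_le_card_of_injective
      (f := fun R : {R : Fin n → Fin n → Prop //
          Reflexive R ∧ Transitive R ∧ ∀ x y, R x y ∨ R y x} =>
        (⟨fun x y => (R.1 x y ∧ ¬ R.1 y x) ∨ x = y,
          fun x => Or.inr rfl,
          by
            rintro x y z (⟨hxy, hyx⟩ | rfl) (⟨hyz, hzy⟩ | rfl)
            · exact Or.inl ⟨R.2.2.1 hxy hyz, fun hzx => hyx (R.2.2.1 hyz hzx)⟩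
            · exact Or.inl ⟨hxy, hyx⟩
            · exact Or.inl ⟨hyz, hzy⟩
            · exact Or.inr rfl,
          by
            rintro x y (⟨hxy, hyx⟩ | rfl) (⟨hyx', _⟩ | h)
            · exact absurd hyx' hyx
            · exact h.symm
            · rfl
            · rfl⟩ :
          {R : Fin n → Fin n → Prop //
            Reflexive R ∧ Transitive R ∧ AntiSymmetric R}))
    rintro ⟨R₁, hr₁, ht₁, htot₁⟩ ⟨R₂, hr₂, ht₂, htot₂⟩ h
    have hval : (fun x y => (R₁ x y ∧ ¬ R₁ y x) ∨ x = y)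
        = (fun x y => (R₂ x y ∧ ¬ R₂ y x) ∨ x = y) := congrArg Subtype.val h
    have key : ∀ (R : Fin n → Fin n → Prop), Reflexive R → (∀ x y, R x y ∨ R y x) →
        ∀ x y, R x y ↔ ¬ ((R y x ∧ ¬ R x y) ∨ y = x) ∨ x = y := by
      intro R hr htot x y
      constructor
      · intro hxy
        by_cases hxy' : x = y
        · exact Or.inr hxy'
        · exact Or.inl (by rintro (⟨_, h2⟩ | rfl); exacts [h2 hxy, hxy' rfl])
      · rintro (hne | rfl)
        · rcases htot x y with h | h
          · exact h
          · by_contra hnxy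
            exact hne (Or.inl ⟨h, hnxy⟩)
        · exact hr x
    refine Subtype.ext (funext fun x => funext fun y => propext ?_)
    show R₁ x y ↔ R₂ x y
    rw [key R₁ hr₁ htot₁ x y, key R₂ hr₂ htot₂ x y,
      congrFun (congrFun hval y) x]
  · -- partial orders ≤ preorders
    apply Nat.card_le_card_of_injective
      (f := fun R : {R : Fin n → Fin n → Prop //
          Reflexive R ∧ Transitive R ∧ AntiSymmetric R} =>
        (⟨R.1, R.2.1, R.2.2.1⟩ : {R : Fin n → Fin n → Prop // Reflexive R ∧ Transitive R}))
    rintro ⟨R₁, h₁⟩ ⟨R₂, h₂⟩ h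
    simp only [Subtype.mk.injEq] at h
    exact Subtype.ext h
  · -- preorders ≤ transitive
    apply Nat.card_le_card_of_injective
      (f := fun R : {R : Fin n → Fin n → Prop // Reflexive R ∧ Transitive R} =>
        (⟨R.1, R.2.2⟩ : {R : Fin n → Fin n → Prop // Transitive R}))
    rintro ⟨R₁, h₁⟩ ⟨R₂, h₂⟩ h
    simp only [Subtype.mk.injEq] at h
    exact Subtype.ext h
end
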